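/- arXiv:2012.12435 — 3 statements merged into one kernel-verified Lean document; each statement's English description precedes it below -/
import Mathlib

section
/- Let G be a group and P a right LCM submonoid of G. For every finite subset F ⊆ P there exists a finite ∨-closed subset F^∨ ⊆ P such that {pP : p ∈ F} ⊆ {pP : p ∈ F^∨} and {pP : p ∈ F^∨} = { ⋂_{p ∈ F'} pP : ∅ ≠ F' ⊆ F and ⋂_{p ∈ F'} pP ≠ ∅ }, i.e., the principal right ideals generated by F^∨ are exactly the nonempty intersections of the principal right ideals generated by elements of F. -/
/-- The principal right ideal `pP = {p r : r ∈ P}` generated by `p`. -/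
def rIdeal {G : Type*} [Group G] (P : Submonoid G) (p : G) : Set G :=
  {x | ∃ r ∈ P, x = p * r}

/-- A finite subset `F ⊆ P` is `∨`-closed if for all `p, q ∈ F` with `pP ∩ qP ≠ ∅` there
is a unique `w ∈ F` with `pP ∩ qP = wP`. -/
def VeeClosed {G : Type*} [Group G] (P : Submonoid G) (F : Finset G) : Prop :=
  ∀ p ∈ F, ∀ q ∈ F, (rIdeal P p ∩ rIdeal P q).Nonempty →
    ∃! w, w ∈ F ∧ rIdeal P p ∩ rIdeal P q = rIdeal P w

lemma key {G : Type*} [Group G] (P : Submonoid G)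
    (hLCM : ∀ p ∈ P, ∀ q ∈ P, (rIdeal P p ∩ rIdeal P q).Nonempty →
      ∃ w ∈ P, rIdeal P p ∩ rIdeal P q = rIdeal P w) :
    ∀ F' : Finset G, F'.Nonempty → ↑F' ⊆ (P : Set G) →
      (⋂ p ∈ F', rIdeal P p).Nonempty →
      ∃ w ∈ P, (⋂ p ∈ F', rIdeal P p) = rIdeal P w := by
  classical
  intro F'
  induction F' using Finset.induction_on with
  | empty => intro h; exact absurd h (by simp)
  | @insert a s ha ih =>
    intro _ hsub hne
    have haP : a ∈ P := hsub (by simp)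
    rcases s.eq_empty_or_nonempty with rfl | hs
    · exact ⟨a, haP, by simp⟩
    · have heq : (⋂ p ∈ insert a s, rIdeal P p) = rIdeal P a ∩ ⋂ p ∈ s, rIdeal P p := by
        simp [Set.biInter_insert]
      have hsne : (⋂ p ∈ s, rIdeal P p).Nonempty := by
        refine hne.mono ?_
        rw [heq]; exact Set.inter_subset_right
      obtain ⟨w, hwP, hw⟩ := ih hs (fun x hx => hsub (by simp [hx])) hsne
      obtain ⟨v, hvP, hv⟩ := hLCM a haP w hwP (by rw [← hw, ← heq]; exact hne)
      exact ⟨v, hvP, by rw [heq, hw, hv]⟩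

/-- For every finite subset `F` of a right LCM submonoid `P` of a group `G` there exists
a finite `∨`-closed subset `F^∨ ⊆ P` with `{pP : p ∈ F} ⊆ {pP : p ∈ F^∨}`, and such that
the principal right ideals generated by `F^∨` are exactly the nonempty intersections of
the principal right ideals generated by elements of `F`. -/
theorem exists_veeClosure {G : Type*} [Group G] (P : Submonoid G)
    (hLCM : ∀ p ∈ P, ∀ q ∈ P, (rIdeal P p ∩ rIdeal P q).Nonempty →
      ∃ w ∈ P, rIdeal P p ∩ rIdeal P q = rIdeal P w)
    (F : Finset G) (hF : ↑F ⊆ (P : Set G)) :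
    ∃ Fv : Finset G, ↑Fv ⊆ (P : Set G) ∧ VeeClosed P Fv ∧
      (fun p => rIdeal P p) '' ↑F ⊆ (fun p => rIdeal P p) '' ↑Fv ∧
      (fun p => rIdeal P p) '' ↑Fv =
        {S : Set G | ∃ F' : Finset G, F'.Nonempty ∧ F' ⊆ F ∧
          (⋂ p ∈ F', rIdeal P p).Nonempty ∧ S = ⋂ p ∈ F', rIdeal P p} := by
  classical
  set ideals : Finset (Set G) :=
    (F.powerset.filter (fun F' => F'.Nonempty ∧ (⋂ p ∈ F', rIdeal P p).Nonempty)).image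
      (fun F' => ⋂ p ∈ F', rIdeal P p) with hideals
  have hidmem : ∀ S : Set G, S ∈ ideals ↔
      ∃ F' : Finset G, F'.Nonempty ∧ F' ⊆ F ∧
        (⋂ p ∈ F', rIdeal P p).Nonempty ∧ S = ⋂ p ∈ F', rIdeal P p := by
    intro S
    simp only [hideals, Finset.mem_image, Finset.mem_filter, Finset.mem_powerset]
    constructor
    · rintro ⟨F', ⟨hsub, hne, hine⟩, rfl⟩; exact ⟨F', hne, hsub, hine, rfl⟩
    · rintro ⟨F', hne, hsub, hine, rfl⟩; exact ⟨F', ⟨hsub, hne, hine⟩, rfl⟩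
  set f : Set G → G := fun S =>
    if h : ∃ w, w ∈ P ∧ rIdeal P w = S then h.choose else 1 with hfdef
  have hf : ∀ S ∈ ideals, f S ∈ P ∧ rIdeal P (f S) = S := by
    intro S hS
    obtain ⟨F', hne, hsub, hine, rfl⟩ := (hidmem S).mp hS
    obtain ⟨w, hwP, hw⟩ := key P hLCM F' hne (fun x hx => hF (hsub hx)) hine
    have hex : ∃ v, v ∈ P ∧ rIdeal P v = ⋂ p ∈ F', rIdeal P p := ⟨w, hwP, hw.symm⟩
    simp only [hfdef, dif_pos hex]
    exact hex.choose_spec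
  refine ⟨ideals.image f, ?_, ?_, ?_, ?_⟩
  · rintro x hx
    simp only [Finset.coe_image, Set.mem_image, Finset.mem_coe] at hx
    obtain ⟨S, hS, rfl⟩ := hx
    exact (hf S hS).1
  · -- VeeClosed
    intro p hp q hq hne
    simp only [Finset.mem_image] at hp hq
    obtain ⟨S₁, hS₁, rfl⟩ := hp
    obtain ⟨S₂, hS₂, rfl⟩ := hq
    obtain ⟨F₁, hne₁, hsub₁, _, hi₁⟩ := (hidmem S₁).mp hS₁
    obtain ⟨F₂, hne₂, hsub₂, _, hi₂⟩ := (hidmem S₂).mp hS₂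
    have hcap : rIdeal P (f S₁) ∩ rIdeal P (f S₂) = ⋂ p ∈ F₁ ∪ F₂, rIdeal P p := by
      rw [(hf S₁ hS₁).2, (hf S₂ hS₂).2, hi₁, hi₂]
      ext x; simp [or_imp, forall_and]
    have hSmem : (rIdeal P (f S₁) ∩ rIdeal P (f S₂)) ∈ ideals := by
      rw [hidmem]
      exact ⟨F₁ ∪ F₂, hne₁.mono Finset.subset_union_left,
        Finset.union_subset hsub₁ hsub₂, hcap ▸ hne, hcap⟩
    refine ⟨f (rIdeal P (f S₁) ∩ rIdeal P (f S₂)),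
      ⟨Finset.mem_image_of_mem f hSmem, (hf _ hSmem).2.symm⟩, ?_⟩
    rintro w ⟨hwmem, hw⟩
    simp only [Finset.mem_image] at hwmem
    obtain ⟨S, hS, rfl⟩ := hwmem
    have : S = rIdeal P (f S₁) ∩ rIdeal P (f S₂) := by rw [← (hf S hS).2, ← hw]
    rw [this]
  · -- image F ⊆ image Fv
    rintro S ⟨p, hp, rfl⟩
    have hpP : p ∈ P := hF hp
    have hSid : rIdeal P p ∈ ideals := by
      rw [hidmem]
      refine ⟨{p}, Finset.singleton_nonempty p, Finset.singleton_subset_iff.mpr hp,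
        ⟨p * 1, ?_⟩, by simp⟩
      · simp only [Finset.mem_singleton, Set.iInter_iInter_eq_left]
        exact ⟨1, P.one_mem, rfl⟩
    exact ⟨f (rIdeal P p), by
      simpa using Finset.mem_image_of_mem f hSid, (hf _ hSid).2⟩
  · -- equality
    ext S
    simp only [Set.mem_image, Finset.coe_image, Finset.mem_coe, Set.mem_setOf_eq]
    constructor
    · rintro ⟨x, hx, rfl⟩
      obtain ⟨T, hT, rfl⟩ := hx
      rw [(hf T hT).2]
      exact (hidmem T).mp hT
    · intro h
      have hS : S ∈ ideals := (hidmem S).mpr h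
      exact ⟨f S, ⟨S, hS, rfl⟩, (hf _ hS).2⟩
end

section
/- Let G be a group and P a right LCM submonoid of G, and for p ∈ P let V_p be the isometric shift on ℓ²(P). Then for all p, q ∈ P: if pP ∩ qP = wP for some w ∈ P, then V_p V_p* · V_q V_q* = V_w V_w*; and if pP ∩ qP = ∅, then V_p V_p* · V_q V_q* = 0. -/
/-- The canonical orthonormal basis vector `δ_r` of `ℓ²(P)`. -/
noncomputable def delta {G : Type*} [Group G] (P : Submonoid G) (r : P) :
    lp (fun _ : P => ℂ) 2 :=
  haveI := Classical.decEq P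
  lp.single 2 r 1

/-!
On `ℓ²(P)` the shift `V_p` sends `δ_r` to `δ_{pr}`, so `V_p*` sends `δ_{pt}` to `δ_t` and kills
every `δ_s` with `s ∉ pP`. Hence `V_p V_p*` is the diagonal projection onto the span of the
`δ_s` with `s ∈ pP`, and the product of two such projections is the diagonal projection onto
`pP ∩ qP`: it is `V_w V_w*` when `pP ∩ qP = wP`, and `0` when the intersection is empty.
-/

open scoped InnerProductSpace

namespace lp

variable {ι : Type*} [DecidableEq ι]

theorem inner_single_one_left (i : ι) (x : lp (fun _ : ι => ℂ) 2) :
    ⟪lp.single 2 i (1 : ℂ), x⟫_ℂ = x i := by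
  simp [lp.inner_single_left]

theorem ext_single_one {F : Type*} [AddCommMonoid F] [Module ℂ F] [TopologicalSpace F] [T2Space F]
    {T S : lp (fun _ : ι => ℂ) 2 →L[ℂ] F}
    (h : ∀ i, T (lp.single 2 i 1) = S (lp.single 2 i 1)) : T = S :=
  lp.ext_continuousLinearMap ENNReal.ofNat_ne_top fun i =>
    ContinuousLinearMap.ext_ring (h i)

variable {f : ι → ι} {V : lp (fun _ : ι => ℂ) 2 →L[ℂ] lp (fun _ : ι => ℂ) 2}

theorem adjoint_single_one_apply (hV : ∀ i, V (lp.single 2 i 1) = lp.single 2 (f i) 1)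
    (j i : ι) :
    (ContinuousLinearMap.adjoint V (lp.single 2 j 1) : ι → ℂ) i = if f i = j then 1 else 0 := by
  rw [← inner_single_one_left, ContinuousLinearMap.adjoint_inner_right, hV,
    inner_single_one_left, lp.single_apply, Pi.single_apply]

theorem adjoint_single_one_of_injective (hV : ∀ i, V (lp.single 2 i 1) = lp.single 2 (f i) 1)
    (hf : f.Injective) (i : ι) :
    ContinuousLinearMap.adjoint V (lp.single 2 (f i) 1) = lp.single 2 i 1 := by
  ext k
  simp only [adjoint_single_one_apply hV, hf.eq_iff, lp.single_apply, Pi.single_apply]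

theorem adjoint_single_one_of_notMem_range
    (hV : ∀ i, V (lp.single 2 i 1) = lp.single 2 (f i) 1) {j : ι} (hj : j ∉ Set.range f) :
    ContinuousLinearMap.adjoint V (lp.single 2 j 1) = 0 := by
  ext k
  rw [adjoint_single_one_apply hV, if_neg fun h => hj ⟨k, h⟩]
  rfl

open scoped Classical in
theorem comp_adjoint_single_one (hV : ∀ i, V (lp.single 2 i 1) = lp.single 2 (f i) 1)
    (hf : f.Injective) (j : ι) :
    (V ∘L ContinuousLinearMap.adjoint V) (lp.single 2 j 1) =
      if j ∈ Set.range f then lp.single 2 j 1 else 0 := by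
  split_ifs with hj
  · obtain ⟨i, rfl⟩ := hj
    rw [ContinuousLinearMap.comp_apply, adjoint_single_one_of_injective hV hf, hV]
  · rw [ContinuousLinearMap.comp_apply, adjoint_single_one_of_notMem_range hV hj, map_zero]

end lp

section

variable {G : Type*} [Group G] {P : Submonoid G}

theorem delta_eq_single [DecidableEq P] (r : P) : delta P r = lp.single 2 r 1 := by
  unfold delta
  congr!

theorem continuousLinearMap_ext_delta {T S : lp (fun _ : P => ℂ) 2 →L[ℂ] lp (fun _ : P => ℂ) 2}
    (h : ∀ r, T (delta P r) = S (delta P r)) : T = S := by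
  classical
  exact lp.ext_single_one fun r => by simpa only [delta_eq_single] using h r

theorem coe_mem_rIdeal_iff {p s : P} : (s : G) ∈ rIdeal P p ↔ s ∈ Set.range (p * ·) := by
  constructor
  · rintro ⟨r, hr, h⟩
    exact ⟨⟨r, hr⟩, Subtype.ext h.symm⟩
  · rintro ⟨t, rfl⟩
    exact ⟨t, t.2, rfl⟩

open scoped Classical in
theorem shift_comp_adjoint_delta {p : P} {V : lp (fun _ : P => ℂ) 2 →L[ℂ] lp (fun _ : P => ℂ) 2}
    (hV : ∀ r, V (delta P r) = delta P (p * r)) (s : P) :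
    (V ∘L ContinuousLinearMap.adjoint V) (delta P s) =
      if (s : G) ∈ rIdeal P p then delta P s else 0 := by
  simp only [delta_eq_single] at hV ⊢
  simp only [lp.comp_adjoint_single_one hV (mul_right_injective p), coe_mem_rIdeal_iff]

open scoped Classical in
theorem shift_projections_comp_delta {p q : P}
    {Vp Vq : lp (fun _ : P => ℂ) 2 →L[ℂ] lp (fun _ : P => ℂ) 2}
    (hVp : ∀ r, Vp (delta P r) = delta P (p * r)) (hVq : ∀ r, Vq (delta P r) = delta P (q * r))
    (s : P) :
    ((Vp ∘L ContinuousLinearMap.adjoint Vp) ∘L (Vq ∘L ContinuousLinearMap.adjoint Vq))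
        (delta P s) =
      if (s : G) ∈ rIdeal P p ∩ rIdeal P q then delta P s else 0 := by
  rw [ContinuousLinearMap.comp_apply, shift_comp_adjoint_delta hVq]
  split_ifs <;> simp_all [shift_comp_adjoint_delta hVp]

end

theorem shift_range_projections_nica_general {G : Type*} [Group G] (P : Submonoid G)
    (p q : P)
    (Vp Vq : lp (fun _ : P => ℂ) 2 →L[ℂ] lp (fun _ : P => ℂ) 2)
    (hVp : ∀ r : P, Vp (delta P r) = delta P (p * r))
    (hVq : ∀ r : P, Vq (delta P r) = delta P (q * r)) :
    (∀ w : P, rIdeal P (p : G) ∩ rIdeal P (q : G) = rIdeal P (w : G) →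
      ∀ Vw : lp (fun _ : P => ℂ) 2 →L[ℂ] lp (fun _ : P => ℂ) 2,
        (∀ r : P, Vw (delta P r) = delta P (w * r)) →
        (Vp ∘L ContinuousLinearMap.adjoint Vp) ∘L (Vq ∘L ContinuousLinearMap.adjoint Vq) =
          Vw ∘L ContinuousLinearMap.adjoint Vw) ∧
    (rIdeal P (p : G) ∩ rIdeal P (q : G) = ∅ →
      (Vp ∘L ContinuousLinearMap.adjoint Vp) ∘L (Vq ∘L ContinuousLinearMap.adjoint Vq) = 0) := by
  refine ⟨fun w hw Vw hVw => ?_, fun hpq => ?_⟩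
  · refine continuousLinearMap_ext_delta fun s => ?_
    rw [shift_projections_comp_delta hVp hVq, shift_comp_adjoint_delta hVw]
    congr 1
    rw [hw]
  · refine continuousLinearMap_ext_delta fun s => ?_
    simp only [shift_projections_comp_delta hVp hVq, hpq, Set.mem_empty_iff_false, if_false,
      zero_apply]

/-- For the isometric shifts on `ℓ²(P)` over a right LCM submonoid `P` of a group `G`:
if `pP ∩ qP = wP` then `V_p V_p* ⬝ V_q V_q* = V_w V_w*`, and if `pP ∩ qP = ∅` then
`V_p V_p* ⬝ V_q V_q* = 0`. -/
theorem shift_range_projections_nica {G : Type*} [Group G] (P : Submonoid G)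
    (hLCM : ∀ p ∈ P, ∀ q ∈ P, (rIdeal P p ∩ rIdeal P q).Nonempty →
      ∃ w ∈ P, rIdeal P p ∩ rIdeal P q = rIdeal P w)
    (p q : P)
    (Vp Vq : lp (fun _ : P => ℂ) 2 →L[ℂ] lp (fun _ : P => ℂ) 2)
    (hVp : ∀ r : P, Vp (delta P r) = delta P (p * r))
    (hVq : ∀ r : P, Vq (delta P r) = delta P (q * r)) :
    (∀ w : P, rIdeal P (p : G) ∩ rIdeal P (q : G) = rIdeal P (w : G) →
      ∀ Vw : lp (fun _ : P => ℂ) 2 →L[ℂ] lp (fun _ : P => ℂ) 2,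
        (∀ r : P, Vw (delta P r) = delta P (w * r)) →
        (Vp ∘L ContinuousLinearMap.adjoint Vp) ∘L (Vq ∘L ContinuousLinearMap.adjoint Vq) =
          Vw ∘L ContinuousLinearMap.adjoint Vw) ∧
    (rIdeal P (p : G) ∩ rIdeal P (q : G) = ∅ →
      (Vp ∘L ContinuousLinearMap.adjoint Vp) ∘L (Vq ∘L ContinuousLinearMap.adjoint Vq) = 0) :=
  shift_range_projections_nica_general P p q Vp Vq hVp hVq
end

section
/- Let G be a group and P a right LCM submonoid of G, and for p ∈ P let V_p be the isometric shift on ℓ²(P). Then for all p, q ∈ P: if pP ∩ qP = wP for some w ∈ P, then p⁻¹w ∈ P and q⁻¹w ∈ P, and V_p* V_q = V_{p⁻¹w} V_{q⁻¹w}*; and if pP ∩ qP = ∅, then V_p* V_q = 0. -/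
/-!
Both operators are compared through their adjoints on the basis: `V_q* V_p δ_r = V_q* δ_{pr}`
is `δ_t` if `pr = qt` and `0` if `pr ∉ qP`, while `V_{q⁻¹w} V_{p⁻¹w}* δ_r` is `δ_{q⁻¹wu}` if
`r = p⁻¹wu` and `0` if `r ∉ p⁻¹wP`. The cases match because `pr ∈ qP` iff
`pr ∈ pP ∩ qP = wP` iff `r ∈ p⁻¹wP`, and then `pr = wu = q (q⁻¹wu)`. If `pP ∩ qP = ∅`,
then `pr ∉ qP` always, so the first computation gives `0` throughout.
-/

open ContinuousLinearMap
open scoped lp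

section RightIdeal

variable {G : Type*} [Group G] (P : Submonoid G)

lemma mem_rIdeal_iff {p x : G} : x ∈ rIdeal P p ↔ p⁻¹ * x ∈ P :=
  ⟨fun ⟨r, hr, hx⟩ => by simpa [hx] using hr, fun h => ⟨p⁻¹ * x, h, by group⟩⟩

lemma self_mem_rIdeal {p : G} : p ∈ rIdeal P p :=
  ⟨1, P.one_mem, (mul_one p).symm⟩

lemma mul_mem_rIdeal {p : G} (r : P) : p * r ∈ rIdeal P p :=
  ⟨r, r.2, rfl⟩

lemma mul_mem_rIdeal_inter {p q r t : P} (h : q * t = p * r) :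
    (p * r : G) ∈ rIdeal P p ∩ rIdeal P q :=
  ⟨mul_mem_rIdeal P r, t, t.2, congrArg Subtype.val h.symm⟩

end RightIdeal

section Shift

variable {G : Type*} [Group G] {P : Submonoid G}

lemma inner_delta_left (r : P) (f : ℓ²(P, ℂ)) : inner ℂ (delta P r) f = f r := by
  classical
  simp [delta, lp.inner_single_left]

lemma delta_apply_eq_zero_of_ne {r s : P} (h : s ≠ r) : delta P r s = 0 := by
  classical
  simp [delta, h]

lemma delta_apply_self (r : P) : delta P r r = 1 := by
  classical
  simp [delta]

lemma ext_of_adjoint_delta {A B : ℓ²(P, ℂ) →L[ℂ] ℓ²(P, ℂ)}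
    (h : ∀ r : P, adjoint A (delta P r) = adjoint B (delta P r)) : A = B := by
  ext1 x
  refine lp.ext (funext fun r => ?_)
  rw [← inner_delta_left, ← inner_delta_left, ← adjoint_inner_left, ← adjoint_inner_left, h r]

variable {σ : P → P} {V : ℓ²(P, ℂ) →L[ℂ] ℓ²(P, ℂ)}

lemma adjoint_apply_delta_of_injective (hσ : Function.Injective σ)
    (hV : ∀ r : P, V (delta P r) = delta P (σ r)) (t : P) :
    adjoint V (delta P (σ t)) = delta P t := by
  refine lp.ext (funext fun r => ?_)
  rw [← inner_delta_left, adjoint_inner_right, hV, inner_delta_left]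
  by_cases hrt : r = t
  · rw [hrt, delta_apply_self, delta_apply_self]
  · rw [delta_apply_eq_zero_of_ne hrt, delta_apply_eq_zero_of_ne (hσ.ne hrt)]

lemma adjoint_apply_delta_of_notMem_range (hV : ∀ r : P, V (delta P r) = delta P (σ r))
    {s : P} (hs : s ∉ Set.range σ) : adjoint V (delta P s) = 0 := by
  refine lp.ext (funext fun r => ?_)
  rw [← inner_delta_left, adjoint_inner_right, hV, inner_delta_left,
    delta_apply_eq_zero_of_ne (fun h => hs ⟨r, h⟩), lp.coeFn_zero, Pi.zero_apply]

end Shift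

theorem adjoint_shift_mul_shift_general {G : Type*} [Group G] (P : Submonoid G)
    (p q : P)
    (Vp Vq : lp (fun _ : P => ℂ) 2 →L[ℂ] lp (fun _ : P => ℂ) 2)
    (hVp : ∀ r : P, Vp (delta P r) = delta P (p * r))
    (hVq : ∀ r : P, Vq (delta P r) = delta P (q * r)) :
    (∀ w : P, rIdeal P (p : G) ∩ rIdeal P (q : G) = rIdeal P (w : G) →
      ∃ (hpw : (p : G)⁻¹ * (w : G) ∈ P) (hqw : (q : G)⁻¹ * (w : G) ∈ P),
        ∀ Vpw Vqw : lp (fun _ : P => ℂ) 2 →L[ℂ] lp (fun _ : P => ℂ) 2,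
          (∀ r : P, Vpw (delta P r) = delta P (⟨(p : G)⁻¹ * (w : G), hpw⟩ * r)) →
          (∀ r : P, Vqw (delta P r) = delta P (⟨(q : G)⁻¹ * (w : G), hqw⟩ * r)) →
          ContinuousLinearMap.adjoint Vp ∘L Vq = Vpw ∘L ContinuousLinearMap.adjoint Vqw) ∧
    (rIdeal P (p : G) ∩ rIdeal P (q : G) = ∅ →
      ContinuousLinearMap.adjoint Vp ∘L Vq = 0) := by
  have hq_inj : Function.Injective (q * · : P → P) := mul_right_injective q
  refine ⟨fun w hw => ?_, fun hempty => ext_of_adjoint_delta fun r => ?_⟩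
  · obtain ⟨hpw, hqw⟩ : (w : G) ∈ rIdeal P p ∩ rIdeal P q := hw ▸ self_mem_rIdeal P
    rw [mem_rIdeal_iff] at hpw hqw
    refine ⟨hpw, hqw, fun Vpw Vqw hVpw hVqw => ext_of_adjoint_delta fun r => ?_⟩
    simp only [adjoint_comp, adjoint_adjoint, comp_apply, hVp]
    by_cases hr : r ∈ Set.range (⟨(p : G)⁻¹ * w, hpw⟩ * · : P → P)
    · obtain ⟨u, rfl⟩ := hr
      have hpq : p * (⟨(p : G)⁻¹ * w, hpw⟩ * u) = q * (⟨(q : G)⁻¹ * w, hqw⟩ * u) :=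
        Subtype.ext (by simp [← mul_assoc])
      rw [hpq, adjoint_apply_delta_of_injective hq_inj hVq,
        adjoint_apply_delta_of_injective (mul_right_injective _) hVpw, hVqw]
    · rw [adjoint_apply_delta_of_notMem_range hVpw hr, map_zero,
        adjoint_apply_delta_of_notMem_range hVq]
      rintro ⟨t, hqt⟩
      have hprw : (p * r : G) ∈ rIdeal P w :=
        hw ▸ mul_mem_rIdeal_inter P hqt
      rw [mem_rIdeal_iff] at hprw
      exact hr ⟨⟨_, hprw⟩, Subtype.ext (by simp [← mul_assoc])⟩
  · simp only [adjoint_comp, adjoint_adjoint, comp_apply, hVp, map_zero, zero_apply]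
    refine adjoint_apply_delta_of_notMem_range hVq fun ⟨t, hqt⟩ => ?_
    simpa [hempty] using mul_mem_rIdeal_inter P hqt

/-- For the isometric shifts on `ℓ²(P)` over a right LCM submonoid `P` of a group `G`:
if `pP ∩ qP = wP` then `p⁻¹w, q⁻¹w ∈ P` and `V_p* V_q = V_{p⁻¹w} V_{q⁻¹w}*`, while if
`pP ∩ qP = ∅` then `V_p* V_q = 0`. -/
theorem adjoint_shift_mul_shift {G : Type*} [Group G] (P : Submonoid G)
    (hLCM : ∀ p ∈ P, ∀ q ∈ P, (rIdeal P p ∩ rIdeal P q).Nonempty →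
      ∃ w ∈ P, rIdeal P p ∩ rIdeal P q = rIdeal P w)
    (p q : P)
    (Vp Vq : lp (fun _ : P => ℂ) 2 →L[ℂ] lp (fun _ : P => ℂ) 2)
    (hVp : ∀ r : P, Vp (delta P r) = delta P (p * r))
    (hVq : ∀ r : P, Vq (delta P r) = delta P (q * r)) :
    (∀ w : P, rIdeal P (p : G) ∩ rIdeal P (q : G) = rIdeal P (w : G) →
      ∃ (hpw : (p : G)⁻¹ * (w : G) ∈ P) (hqw : (q : G)⁻¹ * (w : G) ∈ P),
        ∀ Vpw Vqw : lp (fun _ : P => ℂ) 2 →L[ℂ] lp (fun _ : P => ℂ) 2,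
          (∀ r : P, Vpw (delta P r) = delta P (⟨(p : G)⁻¹ * (w : G), hpw⟩ * r)) →
          (∀ r : P, Vqw (delta P r) = delta P (⟨(q : G)⁻¹ * (w : G), hqw⟩ * r)) →
          ContinuousLinearMap.adjoint Vp ∘L Vq = Vpw ∘L ContinuousLinearMap.adjoint Vqw) ∧
    (rIdeal P (p : G) ∩ rIdeal P (q : G) = ∅ →
      ContinuousLinearMap.adjoint Vp ∘L Vq = 0) :=
  adjoint_shift_mul_shift_general P p q Vp Vq hVp hVq
end
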